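/- The group presented by ⟨a, b | a² = b², b⁻¹ab = ab⁻¹a⟩ is not isomorphic to ℤ. -/

import Mathlib

/-!
The transpositions `a ↦ (0 1)`, `b ↦ (1 2)` satisfy both relations: they are involutions, so
`a² = b² = 1`, and `b⁻¹ab = ab⁻¹a` becomes the braid relation `bab = aba`. Hence the group maps
onto the nonabelian group `S₃`, so it is not abelian, unlike `ℤ`.
-/

/-- The free group on two generators. -/
abbrev F : Type := FreeGroup (Fin 2)

/-- The generator `a`. -/
def a : F := FreeGroup.of 0

/-- The generator `b`. -/
def b : F := FreeGroup.of 1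

/-- The relator set of `⟨a, b | a² = b², b⁻¹ab = ab⁻¹a⟩`. -/
def rels : Set F := {a ^ 2 * (b ^ 2)⁻¹, b⁻¹ * a * b * (a * b⁻¹ * a)⁻¹}

theorem isEmpty_mulEquiv_of_not_commute {G H : Type*} [Group G] [CommGroup H] {x y : G}
    (h : ¬Commute x y) : IsEmpty (G ≃* H) :=
  ⟨fun e => h (by simpa using (Commute.all (e x) (e y)).map e.symm)⟩

def transpositions : Fin 2 → Equiv.Perm (Fin 3) := ![Equiv.swap 0 1, Equiv.swap 1 2]

theorem lift_transpositions_rels : ∀ r ∈ rels, FreeGroup.lift transpositions r = 1 := by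
  rintro r (rfl | rfl) <;>
    simp only [a, b, map_mul, map_pow, map_inv, FreeGroup.lift_apply_of, transpositions,
      Matrix.cons_val_zero, Matrix.cons_val_one] <;> decide

def toPerm : PresentedGroup rels →* Equiv.Perm (Fin 3) :=
  PresentedGroup.toGroup lift_transpositions_rels

theorem not_commute_of_zero_of_one :
    ¬Commute (PresentedGroup.of 0 : PresentedGroup rels) (PresentedGroup.of 1) := by
  intro h
  have h_perm := h.map toPerm
  simp only [toPerm, PresentedGroup.toGroup.of, transpositions, Matrix.cons_val_zero,
    Matrix.cons_val_one] at h_perm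
  exact absurd h_perm.eq (by decide)

/-- The group presented by `⟨a, b | a² = b², b⁻¹ab = ab⁻¹a⟩` is not isomorphic to `ℤ`. -/
theorem presentedGroup_62_c4c2_not_iso_int :
    ¬ Nonempty (PresentedGroup rels ≃* Multiplicative ℤ) :=
  not_nonempty_iff.mpr (isEmpty_mulEquiv_of_not_commute not_commute_of_zero_of_one)
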